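/- With the construction of ũ_g^F below, there exists N > 0 such that for every g ∈ ℝ^{m₁−1} with g_i ≥ N for all i ∈ [m₁−1], and for any choice of x^i ∈ argmin_{x ∈ Γ_i ∩ f_g^{-1}(n)} x_i for each i ∈ [m₁−1], there exists i ∈ [m₁−1] such that (x^i, n) is a strong Stackelberg equilibrium of the game (u^L, ũ_g^F). -/

import Mathlib

/-!
Let `z` minimise `V(z) = max_{j ≠ n} μ(z, j)` over the face `Z` of `Δ_m` spanned by the actions
`m₁, …, m`, and put `A = V(z) - W ≥ 0` and `c_i = M_{{n}} - u^L(i, n) ≥ 0`. Mixing `e_i` with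
weight `A / (g_i + A)` into `z` stays in `Γ_i ∩ f_g⁻¹(n)`, so the critical point `x^i` costs the
leader at most `A c_i / (g_i + A)`. Conversely, wherever `n` is a best response the follower's
comparison with its best action on `Z` forces a cost of at least `min_k A c_k / (g_k + A)`, so the
minimising index `i` is optimal among the profiles ending in `n`. When the follower answers
`j ≠ n` instead, the mass outside the face is `O(1/N)` and the renormalised rest lies in `Z`, where
the proper cover and compactness bound the leader by `M_{{n}} - δ`; so for large `N` these
profiles give at most `M_{{n}} - δ + O(1/N) ≤ M_{{n}} - O(1/N)`.
-/

open scoped Classical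
open Finset

noncomputable section

/-- The leader's mixed-strategy simplex Δ_m. -/
def simplex (m : ℕ) : Set (Fin m → ℝ) := stdSimplex ℝ (Fin m)

/-- Linear extension of a payoff matrix to mixed strategies: u(x,j) = ∑ i, x i * u i j. -/
def pay {m n : ℕ} (u : Fin m → Fin n → ℝ) (x : Fin m → ℝ) (j : Fin n) : ℝ :=
  ∑ i, x i * u i j

/-- Inner product on ℝ^m. -/
def dot {m : ℕ} (a x : Fin m → ℝ) : ℝ := ∑ i, a i * x i

/-- min_{j ∈ S} u(x, j). -/
def minOnL {m n : ℕ} (u : Fin m → Fin n → ℝ) (S : Set (Fin n)) (x : Fin m → ℝ) : ℝ :=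
  sInf ((fun j => pay u x j) '' S)

/-- The leader's maximin value M_S = max_{x∈Δ_m} min_{j∈S} u(x,j). -/
def Mval {m n : ℕ} (u : Fin m → Fin n → ℝ) (S : Set (Fin n)) : ℝ :=
  sSup (minOnL u S '' simplex m)

/-- The set 𝓜_S of maximin strategies. -/
def argMM {m n : ℕ} (u : Fin m → Fin n → ℝ) (S : Set (Fin n)) : Set (Fin m → ℝ) :=
  {x ∈ simplex m | minOnL u S x = Mval u S}

/-- The follower's best-response set BR(x) = argmax_j uF(x,j). -/
def BR {m n : ℕ} (uF : Fin m → Fin n → ℝ) (x : Fin m → ℝ) : Set (Fin n) :=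
  {j | ∀ j', pay uF x j' ≤ pay uF x j}

/-- Strong Stackelberg equilibrium of the game (uL, uF). -/
def SSE {m n : ℕ} (uL uF : Fin m → Fin n → ℝ) (x : Fin m → ℝ) (j : Fin n) : Prop :=
  x ∈ simplex m ∧ j ∈ BR uF x ∧
    ∀ x' ∈ simplex m, ∀ j' ∈ BR uF x', pay uL x' j' ≤ pay uL x j

/-- (x, j) is inducible with respect to the leader payoff uL. -/
def Inducible {m n : ℕ} (uL : Fin m → Fin n → ℝ) (x : Fin m → ℝ) (j : Fin n) : Prop :=
  ∃ uF : Fin m → Fin n → ℝ, SSE uL uF x j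

/-- μ is a (maximin-)cover of S w.r.t. uL: max_{x∈𝓜_S} max_{j∈BR(x)} uL(x,j) < M_S. -/
def IsCover {m n : ℕ} (uL μ : Fin m → Fin n → ℝ) (S : Set (Fin n)) : Prop :=
  ∀ x ∈ argMM uL S, ∀ j ∈ BR μ x, pay uL x j < Mval uL S

/-- μ is a proper cover of S w.r.t. uL. -/
def IsProperCover {m n : ℕ} (uL μ : Fin m → Fin n → ℝ) (S : Set (Fin n)) : Prop :=
  IsCover uL μ S ∧ ∀ x ∈ simplex m, ∀ j ∈ S, j ∉ BR μ x

/-- The facet Γ_i = {x ∈ Δ_m : 1 − x_i = Σ_{k=m₁}^m x_k} (0-based indices: the paper's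
actions m₁,…,m are the indices k with m₁−1 ≤ (k:ℕ)). -/
def GammaSet {m : ℕ} (m₁ : ℕ) (i : Fin m) : Set (Fin m → ℝ) :=
  {x ∈ simplex m |
    1 - x i = ∑ k ∈ Finset.univ.filter (fun k : Fin m => m₁ - 1 ≤ (k : ℕ)), x k}

/-- W = min_{i∈[m], j∈[n]} μ(i,j) − 1. -/
def Wmin {m n : ℕ} (μ : Fin m → Fin n → ℝ) : ℝ :=
  sInf (Set.range fun p : Fin m × Fin n => μ p.1 p.2) - 1

/-- The follower payoff ũ_g^F (as a matrix; on Δ_m its linear extension is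
ũ_g^F(x,j) = Σ_{i=m₁}^m x_i·μ(i,j) for j ≠ n and
ũ_g^F(x,n) = Σ_{i=1}^{m₁−1} x_i·g_i + W·Σ_{i=m₁}^m x_i). -/
def tuFg {m n : ℕ} (m₁ : ℕ) (μ : Fin m → Fin n → ℝ) (jn : Fin n) (g : Fin m → ℝ) :
    Fin m → Fin n → ℝ :=
  fun i j =>
    if j = jn then (if (i : ℕ) < m₁ - 1 then g i else Wmin μ)
    else (if (i : ℕ) < m₁ - 1 then 0 else μ i j)

/-- f_g^{-1}(n) = {x ∈ Δ_m : n ∈ f_g(x)} where f_g is the BR-correspondence of ũ_g^F. -/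
def finv {m n : ℕ} (m₁ : ℕ) (μ : Fin m → Fin n → ℝ) (jn : Fin n) (g : Fin m → ℝ) :
    Set (Fin m → ℝ) :=
  {x ∈ simplex m | jn ∈ BR (tuFg m₁ μ jn g) x}

section Payoff

variable {m n : ℕ}

lemma pay_add (u : Fin m → Fin n → ℝ) (x y : Fin m → ℝ) (j : Fin n) :
    pay u (x + y) j = pay u x j + pay u y j := by
  simp only [pay, Pi.add_apply, add_mul, sum_add_distrib]

lemma pay_smul (u : Fin m → Fin n → ℝ) (a : ℝ) (x : Fin m → ℝ) (j : Fin n) :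
    pay u (a • x) j = a * pay u x j := by
  simp only [pay, Pi.smul_apply, smul_eq_mul, mul_sum, mul_assoc]

lemma pay_single (u : Fin m → Fin n → ℝ) (i : Fin m) (j : Fin n) :
    pay u (Pi.single i 1) j = u i j := by
  simp [pay, Pi.single_apply]

lemma continuous_pay (u : Fin m → Fin n → ℝ) (j : Fin n) :
    Continuous fun x : Fin m → ℝ => pay u x j := by
  unfold pay
  fun_prop

lemma pay_le_of_le {u : Fin m → Fin n → ℝ} {j : Fin n} {a : ℝ} (h : ∀ i, u i j ≤ a)
    {x : Fin m → ℝ} (hx : x ∈ simplex m) : pay u x j ≤ a :=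
  calc pay u x j ≤ ∑ i, x i * a := sum_le_sum fun i _ => mul_le_mul_of_nonneg_left (h i) (hx.1 i)
    _ = a := by rw [← sum_mul, hx.2, one_mul]

lemma le_pay_of_le {u : Fin m → Fin n → ℝ} {j : Fin n} {a : ℝ} (h : ∀ i, a ≤ u i j)
    {x : Fin m → ℝ} (hx : x ∈ simplex m) : a ≤ pay u x j :=
  calc a = ∑ i, x i * a := by rw [← sum_mul, hx.2, one_mul]
    _ ≤ pay u x j := sum_le_sum fun i _ => mul_le_mul_of_nonneg_left (h i) (hx.1 i)

lemma minOnL_singleton (u : Fin m → Fin n → ℝ) (j : Fin n) (x : Fin m → ℝ) :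
    minOnL u {j} x = pay u x j := by
  rw [minOnL, Set.image_singleton, csInf_singleton]

lemma Mval_singleton_eq {uL : Fin m → Fin n → ℝ} {jn : Fin n} {Mn : ℝ}
    (hle : ∀ i, uL i jn ≤ Mn) (i₀ : Fin m) (h₀ : uL i₀ jn = Mn) : Mval uL {jn} = Mn := by
  refine IsGreatest.csSup_eq ⟨⟨Pi.single i₀ 1, single_mem_stdSimplex ℝ i₀, ?_⟩, ?_⟩
  · rw [minOnL_singleton, pay_single, h₀]
  · rintro _ ⟨x, hx, rfl⟩
    rw [minOnL_singleton]
    exact pay_le_of_le hle hx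

lemma mem_BR_of_forall_ne {μ : Fin m → Fin n → ℝ} {x : Fin m → ℝ} {jn j : Fin n}
    (hjn : jn ∉ BR μ x) (hj : ∀ j' ≠ jn, pay μ x j' ≤ pay μ x j) : j ∈ BR μ x := by
  obtain ⟨j₁, hj₁⟩ : ∃ j₁, pay μ x jn < pay μ x j₁ := by
    by_contra! h
    exact hjn h
  have hj₁jn : j₁ ≠ jn := by
    rintro rfl
    exact hj₁.false
  intro j'
  rcases eq_or_ne j' jn with rfl | hj'
  · exact (hj₁.trans_le (hj j₁ hj₁jn)).le
  · exact hj j' hj'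

lemma IsCompact.exists_forall_le_sub {X : Type*} [TopologicalSpace X] {K : Set X}
    (hK : IsCompact K) {f : X → ℝ} (hf : ContinuousOn f K) {c : ℝ} (hlt : ∀ x ∈ K, f x < c) :
    ∃ δ > 0, ∀ x ∈ K, f x ≤ c - δ := by
  rcases K.eq_empty_or_nonempty with rfl | hne
  · exact ⟨1, one_pos, by simp⟩
  obtain ⟨x₀, hx₀, hmax⟩ := hK.exists_isMaxOn hne hf
  exact ⟨c - f x₀, sub_pos.2 (hlt x₀ hx₀), fun x hx => by linarith [isMaxOn_iff.1 hmax x hx]⟩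

lemma IsCompact.exists_minimax {X ι : Type*} [TopologicalSpace X] {K : Set X}
    (hK : IsCompact K) (hne : K.Nonempty) {s : Finset ι} (hs : s.Nonempty) {f : ι → X → ℝ}
    (hf : ∀ i ∈ s, Continuous (f i)) :
    ∃ z ∈ K, ∃ V, (∀ i ∈ s, f i z ≤ V) ∧ ∀ x ∈ K, ∃ i ∈ s, V ≤ f i x := by
  obtain ⟨z, hz, hmin⟩ := hK.exists_isMinOn hne (Continuous.finset_sup'_apply hs hf).continuousOn
  refine ⟨z, hz, s.sup' hs (f · z), fun i hi => le_sup' (f · z) hi, fun x hx => ?_⟩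
  obtain ⟨i, hi, hix⟩ := exists_mem_eq_sup' hs (f · x)
  exact ⟨i, hi, hix ▸ hmin hx⟩

lemma Wmin_le (μ : Fin m → Fin n → ℝ) (i : Fin m) (j : Fin n) : Wmin μ ≤ μ i j := by
  have h := csInf_le (Set.finite_range fun p : Fin m × Fin n => μ p.1 p.2).bddBelow ⟨(i, j), rfl⟩
  rw [Wmin]
  linarith

namespace IsProperCover

variable {uL μ : Fin m → Fin n → ℝ} {jn : Fin n}

lemma exists_ne (hμ : IsProperCover uL μ {jn}) (hm : 0 < m) : ∃ j, j ≠ jn := by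
  by_contra! h
  exact hμ.2 _ (single_mem_stdSimplex ℝ (⟨0, hm⟩ : Fin m)) jn rfl fun j' => by rw [h j']

lemma pay_lt_Mval (hμ : IsProperCover uL μ {jn}) {x : Fin m → ℝ} (hx : x ∈ argMM uL {jn})
    {j : Fin n} (hj : ∀ j' ≠ jn, pay μ x j' ≤ pay μ x j) : pay uL x j < Mval uL {jn} :=
  hμ.1 x hx j (mem_BR_of_forall_ne (hμ.2 x hx.1 jn rfl) hj)

lemma exists_gap (hμ : IsProperCover uL μ {jn}) {K : Set (Fin m → ℝ)} (hK : IsCompact K)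
    (hKM : K ⊆ argMM uL {jn}) :
    ∃ δ > 0, ∀ x ∈ K, ∀ j, (∀ j' ≠ jn, pay μ x j' ≤ pay μ x j) →
      pay uL x j ≤ Mval uL {jn} - δ := by
  have hj : ∀ j, ∃ δ > 0, ∀ x ∈ K ∩ {x | ∀ j' ≠ jn, pay μ x j' ≤ pay μ x j},
      pay uL x j ≤ Mval uL {jn} - δ := by
    intro j
    have hclosed : IsClosed {x : Fin m → ℝ | ∀ j' ≠ jn, pay μ x j' ≤ pay μ x j} := by
      simp only [Set.ofPred_forall]
      exact isClosed_iInter fun j' => isClosed_iInter fun _ =>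
        isClosed_le (continuous_pay μ j') (continuous_pay μ j)
    exact (hK.inter_right hclosed).exists_forall_le_sub (continuous_pay uL j).continuousOn
      fun x hx => hμ.pay_lt_Mval (hKM hx.1) hx.2
  choose δ hδ hle using hj
  have hne : (univ : Finset (Fin n)).Nonempty := ⟨jn, mem_univ jn⟩
  refine ⟨univ.inf' hne δ, (lt_inf'_iff hne).2 fun j _ => hδ j, fun x hx j hxj => ?_⟩
  linarith [hle j x ⟨hx, hxj⟩, inf'_le δ (mem_univ j)]

end IsProperCover

end Payoff

section Split

variable {m n : ℕ} {m₁ : ℕ}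

-- With 0-based indices these are the paper's actions `1, …, m₁ - 1` and `m₁, …, m`.
def lowIdx (m m₁ : ℕ) : Finset (Fin m) := univ.filter fun k => (k : ℕ) < m₁ - 1

def highIdx (m m₁ : ℕ) : Finset (Fin m) := univ.filter fun k => m₁ - 1 ≤ (k : ℕ)

@[simp]
lemma mem_lowIdx {k : Fin m} : k ∈ lowIdx m m₁ ↔ (k : ℕ) < m₁ - 1 := by
  simp [lowIdx]

@[simp]
lemma mem_highIdx {k : Fin m} : k ∈ highIdx m m₁ ↔ m₁ - 1 ≤ (k : ℕ) := by
  simp [highIdx]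

lemma sum_lowIdx_add_sum_highIdx (m₁ : ℕ) (f : Fin m → ℝ) :
    ∑ k ∈ lowIdx m m₁, f k + ∑ k ∈ highIdx m m₁, f k = ∑ k, f k := by
  simpa only [lowIdx, highIdx, not_lt] using
    sum_filter_add_sum_filter_not univ (fun k : Fin m => (k : ℕ) < m₁ - 1) f

def highFace (m m₁ : ℕ) : Set (Fin m → ℝ) := {x ∈ simplex m | ∀ k ∈ lowIdx m m₁, x k = 0}

lemma isCompact_highFace (m m₁ : ℕ) : IsCompact (highFace m m₁) := by
  refine (isCompact_stdSimplex ℝ (Fin m)).inter_right ?_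
  show IsClosed {x : Fin m → ℝ | ∀ k ∈ lowIdx m m₁, x k = 0}
  simp only [Set.ofPred_forall]
  exact isClosed_iInter fun k => isClosed_iInter fun _ =>
    isClosed_eq (continuous_apply k) continuous_const

lemma single_mem_highFace {k : Fin m} (hk : k ∈ highIdx m m₁) :
    Pi.single k 1 ∈ highFace m m₁ := by
  refine ⟨single_mem_stdSimplex ℝ k, fun l hl => Pi.single_eq_of_ne ?_ 1⟩
  rintro rfl
  simp only [mem_lowIdx, mem_highIdx] at hk hl
  omega

lemma sum_lowIdx_mul_eq_zero {x : Fin m → ℝ} (hx : x ∈ highFace m m₁) (f : Fin m → ℝ) :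
    ∑ k ∈ lowIdx m m₁, x k * f k = 0 :=
  sum_eq_zero fun k hk => by rw [hx.2 k hk, zero_mul]

lemma sum_highIdx_eq_one {x : Fin m → ℝ} (hx : x ∈ highFace m m₁) :
    ∑ k ∈ highIdx m m₁, x k = 1 := by
  have h := sum_lowIdx_add_sum_highIdx m₁ x
  rwa [sum_eq_zero hx.2, zero_add, hx.1.2] at h

lemma pay_eq_sum_highIdx {x : Fin m → ℝ} (hx : x ∈ highFace m m₁) (u : Fin m → Fin n → ℝ)
    (j : Fin n) : pay u x j = ∑ k ∈ highIdx m m₁, x k * u k j := by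
  rw [pay, ← sum_lowIdx_add_sum_highIdx m₁, sum_lowIdx_mul_eq_zero hx, zero_add]

def highNormalize (m₁ : ℕ) (x : Fin m → ℝ) : Fin m → ℝ :=
  fun k => if m₁ - 1 ≤ (k : ℕ) then x k / ∑ l ∈ highIdx m m₁, x l else 0

lemma highNormalize_of_mem_lowIdx (x : Fin m → ℝ) {k : Fin m} (hk : k ∈ lowIdx m m₁) :
    highNormalize m₁ x k = 0 :=
  if_neg (not_le.2 (mem_lowIdx.1 hk))

lemma highNormalize_of_mem_highIdx (x : Fin m → ℝ) {k : Fin m} (hk : k ∈ highIdx m m₁) :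
    highNormalize m₁ x k = x k / ∑ l ∈ highIdx m m₁, x l :=
  if_pos (mem_highIdx.1 hk)

lemma highNormalize_mem_highFace {x : Fin m → ℝ} (hx : x ∈ simplex m)
    (hs : 0 < ∑ k ∈ highIdx m m₁, x k) : highNormalize m₁ x ∈ highFace m m₁ := by
  refine ⟨⟨fun k => ?_, ?_⟩, fun k => highNormalize_of_mem_lowIdx x⟩
  · unfold highNormalize
    split_ifs
    exacts [div_nonneg (hx.1 k) hs.le, le_rfl]
  · rw [← sum_lowIdx_add_sum_highIdx m₁, sum_eq_zero fun k => highNormalize_of_mem_lowIdx x,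
      zero_add, sum_congr rfl fun k => highNormalize_of_mem_highIdx x, ← sum_div,
      div_self hs.ne']

lemma sum_highIdx_mul_eq {x : Fin m → ℝ} (hs : ∑ k ∈ highIdx m m₁, x k ≠ 0)
    (u : Fin m → Fin n → ℝ) (j : Fin n) :
    ∑ k ∈ highIdx m m₁, x k * u k j
      = (∑ k ∈ highIdx m m₁, x k) * pay u (highNormalize m₁ x) j := by
  have hlow : ∑ k ∈ lowIdx m m₁, highNormalize m₁ x k * u k j = 0 := sum_eq_zero fun k hk => by
    rw [highNormalize_of_mem_lowIdx x hk, zero_mul]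
  rw [pay, ← sum_lowIdx_add_sum_highIdx m₁, hlow, zero_add, mul_sum]
  refine sum_congr rfl fun k hk => ?_
  rw [highNormalize_of_mem_highIdx x hk]
  field_simp

lemma eq_zero_of_mem_GammaSet {i : Fin m} (hi : i ∈ lowIdx m m₁) {x : Fin m → ℝ}
    (hx : x ∈ GammaSet m₁ i) {k : Fin m} (hk : k ∈ lowIdx m m₁) (hki : k ≠ i) : x k = 0 := by
  have hsum : ∑ l ∈ lowIdx m m₁, x l = x i := by
    have hhigh : ∑ l ∈ highIdx m m₁, x l = 1 - x i := hx.2.symm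
    linarith [sum_lowIdx_add_sum_highIdx m₁ x, hx.1.2]
  rw [← add_sum_erase _ _ hi, add_eq_left] at hsum
  exact (sum_eq_zero_iff_of_nonneg fun l _ => hx.1.1 l).1 hsum k (mem_erase.2 ⟨hki, hk⟩)

lemma sum_lowIdx_mul_of_mem_GammaSet {i : Fin m} (hi : i ∈ lowIdx m m₁) {x : Fin m → ℝ}
    (hx : x ∈ GammaSet m₁ i) (f : Fin m → ℝ) : ∑ k ∈ lowIdx m m₁, x k * f k = x i * f i :=
  sum_eq_single_of_mem i hi fun k hk hki => by rw [eq_zero_of_mem_GammaSet hi hx hk hki, zero_mul]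

end Split

section Construction

variable {m n : ℕ} {m₁ : ℕ} {μ uL : Fin m → Fin n → ℝ} {jn : Fin n} {g : Fin m → ℝ} {Mn : ℝ}

lemma pay_tuFg_self (x : Fin m → ℝ) :
    pay (tuFg m₁ μ jn g) x jn
      = ∑ k ∈ lowIdx m m₁, x k * g k + Wmin μ * ∑ k ∈ highIdx m m₁, x k := by
  rw [pay, ← sum_lowIdx_add_sum_highIdx m₁, mul_sum]
  congr 1 <;> refine sum_congr rfl fun k hk => ?_
  · simp [tuFg, mem_lowIdx.1 hk]
  · simp [tuFg, not_lt.2 (mem_highIdx.1 hk), mul_comm]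

lemma pay_tuFg_of_ne (x : Fin m → ℝ) {j : Fin n} (hj : j ≠ jn) :
    pay (tuFg m₁ μ jn g) x j = ∑ k ∈ highIdx m m₁, x k * μ k j := by
  rw [pay, ← sum_lowIdx_add_sum_highIdx m₁, sum_eq_zero fun k hk => by
    simp [tuFg, hj, mem_lowIdx.1 hk], zero_add]
  exact sum_congr rfl fun k hk => by simp [tuFg, hj, not_lt.2 (mem_highIdx.1 hk)]

lemma pay_eq_sub_sum_lowIdx (hhigh : ∀ i : Fin m, m₁ - 1 ≤ (i : ℕ) → uL i jn = Mn) {x : Fin m → ℝ}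
    (hx : x ∈ simplex m) :
    pay uL x jn = Mn - ∑ k ∈ lowIdx m m₁, x k * (Mn - uL k jn) := by
  have hzero : ∑ k ∈ highIdx m m₁, x k * (Mn - uL k jn) = 0 := sum_eq_zero fun k hk => by
    rw [hhigh k (mem_highIdx.1 hk), sub_self, mul_zero]
  rw [← add_zero (∑ k ∈ lowIdx m m₁, _), ← hzero, sum_lowIdx_add_sum_highIdx]
  simp only [mul_sub, sum_sub_distrib, ← sum_mul, hx.2, one_mul, pay]
  ring

lemma highFace_subset_argMM (hM : Mval uL {jn} = Mn)
    (hhigh : ∀ i : Fin m, m₁ - 1 ≤ (i : ℕ) → uL i jn = Mn) : highFace m m₁ ⊆ argMM uL {jn} := by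
  intro z hz
  refine ⟨hz.1, ?_⟩
  rw [minOnL_singleton, hM, pay_eq_sub_sum_lowIdx hhigh hz.1, sum_lowIdx_mul_eq_zero hz, sub_zero]

lemma mix_mem_GammaSet_inter_finv {z : Fin m → ℝ} (hz : z ∈ highFace m m₁) {V : ℝ}
    (hzV : ∀ j ≠ jn, pay μ z j ≤ V) {i : Fin m} (hi : i ∈ lowIdx m m₁) {t : ℝ} (ht0 : 0 ≤ t)
    (ht1 : t ≤ 1) (ht : (1 - t) * (V - Wmin μ) ≤ t * g i) :
    t • Pi.single i 1 + (1 - t) • z ∈ GammaSet m₁ i ∩ finv m₁ μ jn g := by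
  have hmem : t • Pi.single i 1 + (1 - t) • z ∈ simplex m :=
    convex_stdSimplex ℝ (Fin m) (single_mem_stdSimplex ℝ i) hz.1 ht0 (by linarith) (by ring)
  have hsingle : ∀ k ∈ highIdx m m₁, (Pi.single i 1 : Fin m → ℝ) k = 0 := fun k hk =>
    Pi.single_eq_of_ne (by rintro rfl; simp at hi hk; omega) 1
  refine ⟨⟨hmem, ?_⟩, hmem, fun j => ?_⟩
  · show 1 - _ = ∑ k ∈ highIdx m m₁, _
    simp only [Pi.add_apply, Pi.smul_apply, smul_eq_mul, sum_add_distrib, ← mul_sum,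
      sum_eq_zero hsingle, sum_highIdx_eq_one hz, Pi.single_eq_same, hz.2 i hi]
    ring
  have hjn : pay (tuFg m₁ μ jn g) (t • Pi.single i 1 + (1 - t) • z) jn
      = t * g i + (1 - t) * Wmin μ := by
    rw [pay_add, pay_smul, pay_smul, pay_single, pay_tuFg_self z, sum_lowIdx_mul_eq_zero hz,
      sum_highIdx_eq_one hz]
    simp [tuFg, mem_lowIdx.1 hi]
  rcases eq_or_ne j jn with rfl | hj
  · rfl
  rw [hjn, pay_add, pay_smul, pay_smul, pay_single, pay_tuFg_of_ne z hj,
    ← pay_eq_sum_highIdx hz]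
  simp only [tuFg, hj, if_false, mem_lowIdx.1 hi, if_true, mul_zero, zero_add]
  nlinarith [mul_le_mul_of_nonneg_left (hzV j hj) (sub_nonneg.2 ht1)]

lemma sum_highIdx_mul_le_of_mem_BR {V : ℝ} (hV : ∀ z ∈ highFace m m₁, ∃ j ≠ jn, V ≤ pay μ z j)
    (hg : ∀ k ∈ lowIdx m m₁, 0 ≤ g k) {x : Fin m → ℝ} (hx : x ∈ simplex m)
    (hBR : jn ∈ BR (tuFg m₁ μ jn g) x) :
    (∑ k ∈ highIdx m m₁, x k) * (V - Wmin μ) ≤ ∑ k ∈ lowIdx m m₁, x k * g k := by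
  rcases (sum_nonneg fun k _ => hx.1 k : 0 ≤ ∑ k ∈ highIdx m m₁, x k).eq_or_lt with hs | hs
  · rw [← hs, zero_mul]
    exact sum_nonneg fun k hk => mul_nonneg (hx.1 k) (hg k hk)
  obtain ⟨j, hj, hVj⟩ := hV _ (highNormalize_mem_highFace hx hs)
  have h := hBR j
  rw [pay_tuFg_of_ne x hj, pay_tuFg_self, sum_highIdx_mul_eq hs.ne'] at h
  nlinarith [mul_le_mul_of_nonneg_left hVj hs.le]

lemma mul_sum_lowIdx_le_of_mem_BR {N B : ℝ} (hB : ∀ i j, μ i j - Wmin μ ≤ B) (hB0 : 0 ≤ B)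
    (hg : ∀ k ∈ lowIdx m m₁, N ≤ g k) {x : Fin m → ℝ} (hx : x ∈ simplex m) {j : Fin n}
    (hj : j ≠ jn) (hBR : j ∈ BR (tuFg m₁ μ jn g) x) : N * ∑ k ∈ lowIdx m m₁, x k ≤ B := by
  have h := hBR jn
  rw [pay_tuFg_of_ne x hj, pay_tuFg_self] at h
  have hs : ∑ k ∈ highIdx m m₁, x k ≤ 1 := by
    linarith [sum_lowIdx_add_sum_highIdx m₁ x, hx.2,
      sum_nonneg fun k (_ : k ∈ lowIdx m m₁) => hx.1 k]
  calc N * ∑ k ∈ lowIdx m m₁, x k ≤ ∑ k ∈ lowIdx m m₁, x k * g k := by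
        rw [mul_sum]
        exact sum_le_sum fun k hk => by
          rw [mul_comm]
          exact mul_le_mul_of_nonneg_left (hg k hk) (hx.1 k)
    _ ≤ ∑ k ∈ highIdx m m₁, x k * (μ k j - Wmin μ) := by
        simp only [mul_sub, sum_sub_distrib, ← sum_mul]
        linarith
    _ ≤ ∑ k ∈ highIdx m m₁, x k * B :=
        sum_le_sum fun k _ => mul_le_mul_of_nonneg_left (hB k j) (hx.1 k)
    _ ≤ B := by rw [← sum_mul]; nlinarith

lemma pay_le_of_mem_BR_of_ne {c Q : ℝ}
    (hgap : ∀ z ∈ highFace m m₁, ∀ j, (∀ j' ≠ jn, pay μ z j' ≤ pay μ z j) → pay uL z j ≤ c)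
    (hQ : ∀ i j, uL i j ≤ Q) {x : Fin m → ℝ} (hx : x ∈ simplex m) {j : Fin n} (hj : j ≠ jn)
    (hBR : j ∈ BR (tuFg m₁ μ jn g) x) :
    pay uL x j ≤ c + (∑ k ∈ lowIdx m m₁, x k) * (Q - c) := by
  set s := ∑ k ∈ highIdx m m₁, x k
  have hhigh : ∑ k ∈ highIdx m m₁, x k * uL k j ≤ s * c := by
    rcases (sum_nonneg fun k _ => hx.1 k : 0 ≤ s).eq_or_lt with hs | hs
    · have hzero := (sum_eq_zero_iff_of_nonneg fun k _ => hx.1 k).1 hs.symm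
      rw [show s = 0 from hs.symm, zero_mul, sum_eq_zero fun k hk => by rw [hzero k hk, zero_mul]]
    rw [sum_highIdx_mul_eq hs.ne']
    refine mul_le_mul_of_nonneg_left (hgap _ (highNormalize_mem_highFace hx hs) j fun j' hj' => ?_)
      hs.le
    have h := hBR j'
    rw [pay_tuFg_of_ne x hj', pay_tuFg_of_ne x hj, sum_highIdx_mul_eq hs.ne',
      sum_highIdx_mul_eq hs.ne'] at h
    exact le_of_mul_le_mul_left h hs
  have hlow : ∑ k ∈ lowIdx m m₁, x k * uL k j ≤ (∑ k ∈ lowIdx m m₁, x k) * Q := by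
    rw [sum_mul]
    exact sum_le_sum fun k _ => mul_le_mul_of_nonneg_left (hQ k j) (hx.1 k)
  have hs : s = 1 - ∑ k ∈ lowIdx m m₁, x k := by
    linarith [sum_lowIdx_add_sum_highIdx m₁ x, hx.2]
  calc pay uL x j = ∑ k ∈ lowIdx m m₁, x k * uL k j + ∑ k ∈ highIdx m m₁, x k * uL k j :=
        (sum_lowIdx_add_sum_highIdx m₁ _).symm
    _ ≤ (∑ k ∈ lowIdx m m₁, x k) * Q + s * c := add_le_add hlow hhigh
    _ = c + (∑ k ∈ lowIdx m m₁, x k) * (Q - c) := by rw [hs]; ring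

lemma pay_le_of_jn_mem_BR (hhigh : ∀ i : Fin m, m₁ - 1 ≤ (i : ℕ) → uL i jn = Mn) {V r : ℝ}
    (hV : ∀ z ∈ highFace m m₁, ∃ j ≠ jn, V ≤ pay μ z j) (hg : ∀ k ∈ lowIdx m m₁, 0 ≤ g k)
    (hr0 : 0 ≤ r) (hr : ∀ k ∈ lowIdx m m₁, r * (g k + (V - Wmin μ)) ≤ Mn - uL k jn)
    {x : Fin m → ℝ} (hx : x ∈ simplex m) (hBR : jn ∈ BR (tuFg m₁ μ jn g) x) :
    pay uL x jn ≤ Mn - (V - Wmin μ) * r := by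
  have hβ := sum_highIdx_mul_le_of_mem_BR hV hg hx hBR
  have hsum : ∑ k ∈ lowIdx m m₁, x k + ∑ k ∈ highIdx m m₁, x k = 1 :=
    (sum_lowIdx_add_sum_highIdx m₁ x).trans hx.2
  have hmass : V - Wmin μ ≤ ∑ k ∈ lowIdx m m₁, x k * (g k + (V - Wmin μ)) := by
    simp only [mul_add, sum_add_distrib, ← sum_mul]
    linear_combination hβ - (V - Wmin μ) * hsum
  rw [pay_eq_sub_sum_lowIdx hhigh hx]
  refine sub_le_sub_left ?_ Mn
  calc (V - Wmin μ) * r ≤ r * ∑ k ∈ lowIdx m m₁, x k * (g k + (V - Wmin μ)) := by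
        rw [mul_comm]
        exact mul_le_mul_of_nonneg_left hmass hr0
    _ = ∑ k ∈ lowIdx m m₁, x k * (r * (g k + (V - Wmin μ))) := by
        rw [mul_sum]
        exact sum_congr rfl fun k _ => by ring
    _ ≤ ∑ k ∈ lowIdx m m₁, x k * (Mn - uL k jn) :=
        sum_le_sum fun k hk => mul_le_mul_of_nonneg_left (hr k hk) (hx.1 k)

lemma sub_le_pay_of_isMinOn_GammaSet (hhigh : ∀ i : Fin m, m₁ - 1 ≤ (i : ℕ) → uL i jn = Mn)
    {z : Fin m → ℝ} (hz : z ∈ highFace m m₁) {V : ℝ} (hzV : ∀ j ≠ jn, pay μ z j ≤ V)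
    (hA : 0 ≤ V - Wmin μ) {i : Fin m} (hi : i ∈ lowIdx m m₁) (hgi : 0 < g i)
    (hci : uL i jn ≤ Mn) {x : Fin m → ℝ} (hx : x ∈ GammaSet m₁ i ∩ finv m₁ μ jn g)
    (hmin : ∀ y ∈ GammaSet m₁ i ∩ finv m₁ μ jn g, x i ≤ y i) :
    Mn - (V - Wmin μ) * ((Mn - uL i jn) / (g i + (V - Wmin μ))) ≤ pay uL x jn := by
  set A := V - Wmin μ
  have hgA : 0 < g i + A := by linarith
  set t := A / (g i + A)
  have ht : t * (g i + A) = A := div_mul_cancel₀ _ hgA.ne'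
  have hxi : x i ≤ t := by
    have h := hmin _ (mix_mem_GammaSet_inter_finv hz hzV hi (div_nonneg hA hgA.le)
      ((div_le_one hgA).2 (by linarith)) (by linarith))
    simpa [hz.2 i hi] using h
  rw [pay_eq_sub_sum_lowIdx hhigh hx.2.1, sum_lowIdx_mul_of_mem_GammaSet hi hx.1,
    ← mul_div_assoc, mul_div_right_comm]
  nlinarith

lemma exists_forall_critical_value (hm₁ : 1 < m₁) (hm₁m : m₁ ≤ m)
    (hhigh : ∀ i : Fin m, m₁ - 1 ≤ (i : ℕ) → uL i jn = Mn)
    (hlow : ∀ i : Fin m, (i : ℕ) < m₁ - 1 → uL i jn ≤ Mn) (hn : ∃ j, j ≠ jn) :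
    ∃ C, 0 ≤ C ∧ ∀ N > 0, ∀ g : Fin m → ℝ, (∀ i : Fin m, (i : ℕ) < m₁ - 1 → N ≤ g i) →
      ∀ xs : Fin m → Fin m → ℝ,
        (∀ i : Fin m, (i : ℕ) < m₁ - 1 →
          xs i ∈ GammaSet m₁ i ∩ finv m₁ μ jn g ∧
            ∀ x ∈ GammaSet m₁ i ∩ finv m₁ μ jn g, xs i i ≤ x i) →
        ∃ i : Fin m, (i : ℕ) < m₁ - 1 ∧ Mn - C / N ≤ pay uL (xs i) jn ∧
          ∀ x ∈ simplex m, jn ∈ BR (tuFg m₁ μ jn g) x → pay uL x jn ≤ pay uL (xs i) jn := by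
  obtain ⟨j₀, hj₀⟩ := hn
  obtain ⟨z, hz, V, hzV, hV⟩ := (isCompact_highFace m m₁).exists_minimax
    ⟨_, single_mem_highFace (k := ⟨m₁ - 1, by omega⟩) (by simp)⟩ (s := univ.erase jn)
    ⟨j₀, by simpa⟩ fun j _ => continuous_pay μ j
  simp only [mem_erase, mem_univ, and_true] at hzV hV
  set A := V - Wmin μ
  have hA : 0 ≤ A := sub_nonneg.2 ((le_pay_of_le (fun i => Wmin_le μ i j₀) hz.1).trans (hzV j₀ hj₀))
  set k₀ : Fin m := ⟨0, by omega⟩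
  have hk₀ : k₀ ∈ lowIdx m m₁ := by simp [k₀]; omega
  have hc₀ : 0 ≤ Mn - uL k₀ jn := sub_nonneg.2 (hlow k₀ (mem_lowIdx.1 hk₀))
  refine ⟨A * (Mn - uL k₀ jn), mul_nonneg hA hc₀, fun N hN g hg xs hxs => ?_⟩
  have hgA : ∀ k ∈ lowIdx m m₁, N ≤ g k + A := fun k hk => by linarith [hg k (mem_lowIdx.1 hk)]
  obtain ⟨i, hi, hmin⟩ :=
    (lowIdx m m₁).exists_min_image (fun k => (Mn - uL k jn) / (g k + A)) ⟨k₀, hk₀⟩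
  have hi' := mem_lowIdx.1 hi
  have hcrit := sub_le_pay_of_isMinOn_GammaSet hhigh hz hzV hA hi (hN.trans_le (hg i hi'))
    (hlow i hi') (hxs i hi').1 (hxs i hi').2
  refine ⟨i, hi', le_trans ?_ hcrit, fun x hx hBR => le_trans ?_ hcrit⟩
  · rw [mul_div_assoc]
    gcongr Mn - A * ?_
    exact (div_le_div_of_nonneg_left hc₀ hN (hgA k₀ hk₀)).trans' (hmin k₀ hk₀)
  · refine pay_le_of_jn_mem_BR hhigh hV (fun k hk => hN.le.trans (hg k (mem_lowIdx.1 hk)))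
      (div_nonneg (sub_nonneg.2 (hlow i hi')) (hN.le.trans (hgA i hi)))
      (fun k hk => ?_) hx hBR
    rw [← le_div_iff₀ (hN.trans_le (hgA k hk))]
    exact hmin k hk

lemma exists_forall_pay_le_of_ne (hm : m₁ - 1 < m)
    (hhigh : ∀ i : Fin m, m₁ - 1 ≤ (i : ℕ) → uL i jn = Mn)
    (hlow : ∀ i : Fin m, (i : ℕ) < m₁ - 1 → uL i jn ≤ Mn) (hμ : IsProperCover uL μ {jn}) :
    ∃ δ > 0, ∃ K, 0 ≤ K ∧ ∀ N > 0, ∀ g : Fin m → ℝ, (∀ i : Fin m, (i : ℕ) < m₁ - 1 → N ≤ g i) →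
      ∀ x ∈ simplex m, ∀ j ≠ jn, j ∈ BR (tuFg m₁ μ jn g) x → pay uL x j ≤ Mn - δ + K / N := by
  set h₀ : Fin m := ⟨m₁ - 1, hm⟩
  have hM : Mval uL {jn} = Mn := by
    refine Mval_singleton_eq (fun i => ?_) h₀ (hhigh h₀ le_rfl)
    rcases lt_or_ge (i : ℕ) (m₁ - 1) with hi | hi
    exacts [hlow i hi, (hhigh i hi).le]
  obtain ⟨δ, hδ, hgap⟩ := hμ.exists_gap (isCompact_highFace m m₁) (highFace_subset_argMM hM hhigh)
  rw [hM] at hgap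
  obtain ⟨B, hB⟩ := Finite.exists_le fun p : Fin m × Fin n => μ p.1 p.2 - Wmin μ
  obtain ⟨Q, hQ⟩ := Finite.exists_le fun p : Fin m × Fin n => uL p.1 p.2
  have hB0 : 0 ≤ B := (sub_nonneg.2 (Wmin_le μ h₀ jn)).trans (hB (h₀, jn))
  have hQ0 : 0 ≤ Q - (Mn - δ) := by linarith [hQ (h₀, jn), hhigh h₀ le_rfl]
  refine ⟨δ, hδ, B * (Q - (Mn - δ)), mul_nonneg hB0 hQ0, fun N hN g hg x hx j hj hBR => ?_⟩
  have hτ : ∑ k ∈ lowIdx m m₁, x k ≤ B / N := by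
    rw [le_div_iff₀ hN, mul_comm]
    exact mul_sum_lowIdx_le_of_mem_BR (fun i j => hB (i, j)) hB0
      (fun k hk => hg k (mem_lowIdx.1 hk)) hx hj hBR
  calc pay uL x j ≤ Mn - δ + (∑ k ∈ lowIdx m m₁, x k) * (Q - (Mn - δ)) :=
        pay_le_of_mem_BR_of_ne hgap (fun i j => hQ (i, j)) hx hj hBR
    _ ≤ Mn - δ + B / N * (Q - (Mn - δ)) := by gcongr
    _ = Mn - δ + B * (Q - (Mn - δ)) / N := by ring

end Construction

/-- there is N > 0 such that whenever g_i ≥ N for all i ∈ [m₁−1], for any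
choice of critical points x^i ∈ argmin_{x ∈ Γ_i ∩ f_g^{-1}(n)} x_i, some (x^i, n) is a
strong Stackelberg equilibrium of (u^L, ũ_g^F). -/
theorem exists_N_sse {m n : ℕ}
    (uL : Fin m → Fin n → ℝ) (jn : Fin n)
    (m₁ : ℕ) (hm₁ : 1 < m₁) (hm₁m : m₁ ≤ m)
    (Mn : ℝ)
    (hhigh : ∀ i : Fin m, m₁ - 1 ≤ (i : ℕ) → uL i jn = Mn)
    (hlow : ∀ i : Fin m, (i : ℕ) < m₁ - 1 → uL i jn < Mn)
    (μ : Fin m → Fin n → ℝ) (hμ : IsProperCover uL μ {jn}) :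
    ∃ N : ℝ, 0 < N ∧
      ∀ g : Fin m → ℝ, (∀ i : Fin m, (i : ℕ) < m₁ - 1 → N ≤ g i) →
        ∀ xs : Fin m → Fin m → ℝ,
          (∀ i : Fin m, (i : ℕ) < m₁ - 1 →
            xs i ∈ GammaSet m₁ i ∩ finv m₁ μ jn g ∧
              ∀ x ∈ GammaSet m₁ i ∩ finv m₁ μ jn g, xs i i ≤ x i) →
          ∃ i : Fin m, (i : ℕ) < m₁ - 1 ∧ SSE uL (tuFg m₁ μ jn g) (xs i) jn := by
  have hlow' : ∀ i : Fin m, (i : ℕ) < m₁ - 1 → uL i jn ≤ Mn := fun i hi => (hlow i hi).le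
  obtain ⟨δ, hδ, K, hK, hother⟩ := exists_forall_pay_le_of_ne (by omega) hhigh hlow' hμ
  obtain ⟨C, hC, hcrit⟩ :=
    exists_forall_critical_value (μ := μ) hm₁ hm₁m hhigh hlow' (hμ.exists_ne (by omega))
  set N := (K + C) / δ + 1
  have hN : 0 < N := by positivity
  have hKC : K / N + C / N ≤ δ := by
    rw [← add_div, div_le_iff₀ hN, mul_add, mul_div_cancel₀ _ hδ.ne', mul_one]
    linarith
  refine ⟨N, hN, fun g hg xs hxs => ?_⟩
  obtain ⟨i, hi, hval, hjn⟩ := hcrit N hN g hg xs hxs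
  refine ⟨i, hi, (hxs i hi).1.2.1, (hxs i hi).1.2.2, fun x hx j hj => ?_⟩
  rcases eq_or_ne j jn with rfl | hne
  · exact hjn x hx hj
  · linarith [hother N hN g hg x hx j hne hj]
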